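/- arXiv:1611.09104 — 3 statements merged into one kernel-verified Lean document; each statement's English description precedes it below -/
import Mathlib

section
/- Let A₁, A₂, A₃ be regular edge sets in a finite directed acyclic graph with source s. If A₁ ≺ A₂ and A₂ ≺ A₃, then A₁ ≺ A₃; i.e., the domination relation ≺ on regular edge sets is transitive. -/
open Finset

/-- Consecutive edges in the list match head-to-tail. -/
def EChain {V E : Type*} (tl hd : E → V) (p : List E) : Prop :=
  p.Chain' (fun d e => hd d = tl e)

/-- A (nonempty) directed path of edges starting at node `s`. -/
def PathFrom {V E : Type*} (tl hd : E → V) (s : V) (p : List E) : Prop :=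
  p ≠ [] ∧ EChain tl hd p ∧ ∀ e ∈ p.head?, tl e = s

/-- The directed graph is acyclic: no nonempty edge-chain returns to its start. -/
def Acyclic {V E : Type*} (tl hd : E → V) : Prop :=
  ∀ p : List E, p ≠ [] → EChain tl hd p →
    ∀ d ∈ p.head?, ∀ e ∈ p.getLast?, hd e ≠ tl d

/-- `B` separates the edge set `A` from `s`: every directed path from `s`
ending with an edge of `A` passes through an edge of `B` (i.e. `B` is a cut
between `s` and `A`). -/
def Separates {V E : Type*} (tl hd : E → V) (s : V) (A B : Finset E) : Prop :=
  ∀ p : List E, PathFrom tl hd s p → (∃ e ∈ p.getLast?, e ∈ A) → ∃ b ∈ B, b ∈ p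

/-- The minimum cut capacity between `s` and the edge set `A`. -/
noncomputable def mincut {V E : Type*} [Fintype E] (tl hd : E → V) (s : V)
    (A : Finset E) : ℕ :=
  sInf {n | ∃ B : Finset E, Separates tl hd s A B ∧ B.card = n}

/-- `B` is a minimum cut between `s` and the edge set `A`. -/
def IsMinCut {V E : Type*} [Fintype E] (tl hd : E → V) (s : V) (A B : Finset E) : Prop :=
  Separates tl hd s A B ∧ B.card = mincut tl hd s A

/-- An edge set is regular if its cardinality equals its minimum cut capacity from `s`. -/
def Regular {V E : Type*} [Fintype E] (tl hd : E → V) (s : V) (A : Finset E) : Prop :=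
  A.card = mincut tl hd s A

/-- `A ∼ A'`: the two edge sets have a common minimum cut from `s`. -/
def EquivSets {V E : Type*} [Fintype E] (tl hd : E → V) (s : V) (A A' : Finset E) : Prop :=
  ∃ C : Finset E, IsMinCut tl hd s A C ∧ IsMinCut tl hd s A' C

/-- `A₁ ≺ A₂`: `|A₁| < |A₂|` and some minimum cut between `s` and `A₂`
also separates `A₁` from `s`. -/
def Dominates {V E : Type*} [Fintype E] (tl hd : E → V) (s : V) (A₁ A₂ : Finset E) : Prop :=
  A₁.card < A₂.card ∧
    ∃ C : Finset E, IsMinCut tl hd s A₂ C ∧ Separates tl hd s A₁ C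

/-- A directed path of edges from node `s` to node `t`. -/
def NPathFromTo {V E : Type*} (tl hd : E → V) (s t : V) (p : List E) : Prop :=
  PathFrom tl hd s p ∧ ∀ e ∈ p.getLast?, hd e = t

/-- `B` is a cut between the nodes `s` and `t`. -/
def NSeparates {V E : Type*} (tl hd : E → V) (s t : V) (B : Finset E) : Prop :=
  ∀ p : List E, NPathFromTo tl hd s t p → ∃ b ∈ B, b ∈ p

/-- The minimum cut capacity between the nodes `s` and `t`. -/
noncomputable def nmincut {V E : Type*} [Fintype E] (tl hd : E → V) (s t : V) : ℕ :=
  sInf {n | ∃ B : Finset E, NSeparates tl hd s t B ∧ B.card = n}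

/-- `B` is a minimum cut between the nodes `s` and `t`. -/
def IsNodeMinCut {V E : Type*} [Fintype E] (tl hd : E → V) (s t : V) (B : Finset E) : Prop :=
  NSeparates tl hd s t B ∧ B.card = nmincut tl hd s t

/-- `d ≤ e` for edges: there is a directed path starting with `d` and ending with `e`
(in particular `d ≤ d`). -/
def EdgeLe {V E : Type*} (tl hd : E → V) (d e : E) : Prop :=
  ∃ p : List E, EChain tl hd p ∧ p.head? = some d ∧ p.getLast? = some e

/-- A family of pairwise edge-disjoint paths. -/
def EdgeDisjoint {E : Type*} {n : ℕ} (P : Fin n → List E) : Prop :=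
  ∀ i j, i ≠ j → List.Disjoint (P i) (P j)

/-- The primary minimum cut between nodes `s` and `t`: a minimum cut separating
every minimum cut between `s` and `t` from `s`. -/
def IsPrimaryNodeMinCut {V E : Type*} [Fintype E] (tl hd : E → V) (s t : V)
    (C : Finset E) : Prop :=
  IsNodeMinCut tl hd s t C ∧
    ∀ C' : Finset E, IsNodeMinCut tl hd s t C' → Separates tl hd s C' C

/-- The primary minimum cut between `s` and an edge set `A`. -/
def IsPrimaryMinCut {V E : Type*} [Fintype E] (tl hd : E → V) (s : V)
    (A C : Finset E) : Prop :=
  IsMinCut tl hd s A C ∧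
    ∀ C' : Finset E, IsMinCut tl hd s A C' → Separates tl hd s C' C

/-- The equivalence class (within the collection `𝒜`) of the wiretap set `A`
under the relation `∼`. -/
def ClassOf {V E : Type*} [Fintype E] (tl hd : E → V) (s : V)
    (𝒜 : Finset (Finset E)) (A : Finset E) : Set (Finset E) :=
  {A' | A' ∈ 𝒜 ∧ EquivSets tl hd s A A'}

/-- Domination amongst (distinct) equivalence classes: some common minimum cut of all
the sets in `C₂` separates every set in `C₁` from `s`. -/
def ClDominates {V E : Type*} [Fintype E] (tl hd : E → V) (s : V)
    (C₁ C₂ : Set (Finset E)) : Prop :=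
  C₁ ≠ C₂ ∧ ∃ CUT : Finset E,
    (∀ A ∈ C₂, IsMinCut tl hd s A CUT) ∧ (∀ A ∈ C₁, Separates tl hd s A CUT)

/-!
Uncrossing of cuts. Write `R(B)` for the set of vertices reachable from `s` without crossing `B`,
and `cut(S, A)` for the set of edges with tail in `S` whose head lies outside `S` or which belong
to `A`. A minimum cut `B` for `A` equals `cut(R(B), A)`. Take minimum cuts `B₂` for `A₂` separating
`A₁` and `B₃` for `A₃` separating `A₂`. By submodularity, `cut(R(B₂) ∩ R(B₃), A₃)` and
`cut(R(B₂) ∪ R(B₃), A₂)` have total size at most `|B₂| + |B₃|`, so the former is a minimum cut for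
`A₃`. An edge `a ∈ A₁` reached without crossing it has both ends in `R(B₂) ∩ R(B₃)`, so `a ∈ B₂`,
hence `a ∈ A₂`, hence `a ∈ B₃`, hence `a ∈ A₃`, and then `a` lies in that cut after all.
-/

def reach {V E : Type*} (tl hd : E → V) (s : V) (B : Finset E) : Set V :=
  {v | v = s ∨ ∃ p, PathFrom tl hd s p ∧ (∀ e ∈ p, e ∉ B) ∧ ∃ e ∈ p.getLast?, hd e = v}

/-- The edges of `A` inside `S` belong to the cut because reaching an edge of `A` only requires
reaching its tail. -/
noncomputable def edgeCut {V E : Type*} [Fintype E] (tl hd : E → V) (S : Set V)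
    (A : Finset E) : Finset E :=
  open Classical in univ.filter fun e => tl e ∈ S ∧ (hd e ∉ S ∨ e ∈ A)

section Cuts

variable {V E : Type*} {tl hd : E → V} {s : V}

lemma source_mem_reach (B : Finset E) : s ∈ reach tl hd s B := Or.inl rfl

lemma exists_pathFrom_getLast?_eq {B : Finset E} {a : E} (ha : tl a ∈ reach tl hd s B)
    (haB : a ∉ B) : ∃ p, PathFrom tl hd s p ∧ (∀ e ∈ p, e ∉ B) ∧ p.getLast? = some a := by
  rcases ha with ha | ⟨p, ⟨hne, hchain, hhead⟩, hpB, e, he, hea⟩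
  · exact ⟨[a], ⟨by simp, List.isChain_singleton a, by simpa using ha⟩, by simpa using haB, rfl⟩
  · refine ⟨p ++ [a], ⟨by simp, List.IsChain.append hchain (List.isChain_singleton a) ?_, ?_⟩,
      ?_, List.getLast?_concat⟩
    · rintro x hx _ ⟨⟩
      rw [Option.mem_unique hx he]
      exact hea
    · rwa [List.head?_append_of_ne_nil _ hne]
    · simp only [List.mem_append, List.mem_singleton]
      rintro e (he | rfl)
      exacts [hpB e he, haB]

lemma Separates.mem_of_tl_mem_reach {A B : Finset E} (h : Separates tl hd s A B) {a : E}
    (haA : a ∈ A) (ha : tl a ∈ reach tl hd s B) : a ∈ B := by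
  by_contra haB
  obtain ⟨p, hp, hpB, hlast⟩ := exists_pathFrom_getLast?_eq ha haB
  obtain ⟨b, hbB, hbp⟩ := h p hp ⟨a, hlast, haA⟩
  exact hpB b hbp hbB

variable [Fintype E]

lemma mem_edgeCut {S : Set V} {A : Finset E} {e : E} :
    e ∈ edgeCut tl hd S A ↔ tl e ∈ S ∧ (hd e ∉ S ∨ e ∈ A) := by
  classical
  simp [edgeCut]

lemma EChain.confined_of_avoids_edgeCut {S : Set V} {A : Finset E} :
    ∀ {p : List E}, EChain tl hd p → (∀ e ∈ p.head?, tl e ∈ S) →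
      (∀ e ∈ p, e ∉ edgeCut tl hd S A) → ∀ e ∈ p, tl e ∈ S ∧ hd e ∈ S ∧ e ∉ A
  | [], _, _, _ => by simp
  | e :: p, hchain, hhead, hcut => by
    have hte : tl e ∈ S := hhead e rfl
    have hstep : hd e ∈ S ∧ e ∉ A := by simpa [mem_edgeCut, hte] using hcut e (by simp)
    obtain ⟨hlink, hchain'⟩ := List.isChain_cons.1 hchain
    rintro f (_ | ⟨_, hf⟩)
    · exact ⟨hte, hstep⟩
    · exact confined_of_avoids_edgeCut hchain' (fun g hg => hlink g hg ▸ hstep.1)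
        (fun g hg => hcut g (List.mem_cons_of_mem _ hg)) f hf

lemma PathFrom.confined_of_avoids_edgeCut {S : Set V} {A : Finset E} {p : List E}
    (hp : PathFrom tl hd s p) (hs : s ∈ S) (hcut : ∀ e ∈ p, e ∉ edgeCut tl hd S A) :
    ∀ e ∈ p, tl e ∈ S ∧ hd e ∈ S ∧ e ∉ A :=
  EChain.confined_of_avoids_edgeCut hp.2.1 (fun e he => hp.2.2 e he ▸ hs) hcut

lemma separates_edgeCut {S : Set V} (hs : s ∈ S) (A : Finset E) :
    Separates tl hd s A (edgeCut tl hd S A) := by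
  rintro p hp ⟨a, ha, haA⟩
  by_contra! hcut
  exact (hp.confined_of_avoids_edgeCut hs (fun e he h => hcut e h he) a
    (List.mem_of_mem_getLast? ha)).2.2 haA

lemma Separates.mincut_le_card {A B : Finset E} (h : Separates tl hd s A B) :
    mincut tl hd s A ≤ B.card :=
  Nat.sInf_le ⟨B, h, rfl⟩

lemma Separates.edgeCut_reach_subset {A B : Finset E} (h : Separates tl hd s A B) :
    edgeCut tl hd (reach tl hd s B) A ⊆ B := by
  intro e he
  obtain ⟨ht, hhd | heA⟩ := mem_edgeCut.1 he
  · by_contra heB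
    obtain ⟨p, hp, hpB, hlast⟩ := exists_pathFrom_getLast?_eq ht heB
    exact hhd (Or.inr ⟨p, hp, hpB, e, hlast, rfl⟩)
  · exact h.mem_of_tl_mem_reach heA ht

lemma IsMinCut.edgeCut_reach_eq {A B : Finset E} (h : IsMinCut tl hd s A B) :
    edgeCut tl hd (reach tl hd s B) A = B :=
  eq_of_subset_of_card_le h.1.edgeCut_reach_subset
    (h.2 ▸ (separates_edgeCut (source_mem_reach B) A).mincut_le_card)

lemma IsMinCut.mem_iff {A B : Finset E} (h : IsMinCut tl hd s A B) {e : E} :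
    e ∈ B ↔ tl e ∈ reach tl hd s B ∧ (hd e ∉ reach tl hd s B ∨ e ∈ A) := by
  conv_lhs => rw [← h.edgeCut_reach_eq]
  exact mem_edgeCut

lemma card_edgeCut_inter_add_card_edgeCut_union_le {S T : Set V} {A A' : Finset E}
    (hA' : ∀ e ∈ A', tl e ∈ T → hd e ∈ T → e ∈ A) :
    (edgeCut tl hd (S ∩ T) A).card + (edgeCut tl hd (S ∪ T) A').card ≤
      (edgeCut tl hd S A').card + (edgeCut tl hd T A).card := by
  classical
  rw [← card_union_add_card_inter, ← card_union_add_card_inter (edgeCut tl hd S A')]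
  refine Nat.add_le_add (card_le_card fun e => ?_) (card_le_card fun e => ?_) <;>
    simp only [mem_union, mem_inter, mem_edgeCut, Set.mem_inter_iff, Set.mem_union] <;>
    have := hA' e <;> tauto

lemma IsMinCut.edgeCut_reach_inter {A A' B B' : Finset E} (hB : IsMinCut tl hd s A' B)
    (hB' : IsMinCut tl hd s A B') (hA'B' : Separates tl hd s A' B') :
    IsMinCut tl hd s A (edgeCut tl hd (reach tl hd s B ∩ reach tl hd s B') A) := by
  have hA' : ∀ e ∈ A', tl e ∈ reach tl hd s B' → hd e ∈ reach tl hd s B' → e ∈ A :=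
    fun e he ht hh => (hB'.mem_iff.1 (hA'B'.mem_of_tl_mem_reach he ht)).2.resolve_left (· hh)
  have hsub := card_edgeCut_inter_add_card_edgeCut_union_le (S := reach tl hd s B) hA'
  rw [hB.edgeCut_reach_eq, hB'.edgeCut_reach_eq, hB.2, hB'.2] at hsub
  have hinter : Separates tl hd s A (edgeCut tl hd (reach tl hd s B ∩ reach tl hd s B') A) :=
    separates_edgeCut (Set.mem_inter (source_mem_reach B) (source_mem_reach B')) A
  have hunion : Separates tl hd s A' (edgeCut tl hd (reach tl hd s B ∪ reach tl hd s B') A') :=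
    separates_edgeCut (Set.mem_union_left _ (source_mem_reach B)) A'
  have hinter_le := hinter.mincut_le_card
  have hunion_le := hunion.mincut_le_card
  exact ⟨hinter, by omega⟩

lemma Separates.edgeCut_reach_inter {A A' A'' B B' : Finset E} (hB : IsMinCut tl hd s A' B)
    (hB' : IsMinCut tl hd s A B') (hA''B : Separates tl hd s A'' B)
    (hA'B' : Separates tl hd s A' B') :
    Separates tl hd s A'' (edgeCut tl hd (reach tl hd s B ∩ reach tl hd s B') A) := by
  rintro p hp ⟨a, ha, haA''⟩
  by_contra! hcut
  obtain ⟨⟨htB, htB'⟩, ⟨hhB, hhB'⟩, haA⟩ := hp.confined_of_avoids_edgeCut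
    (Set.mem_inter (source_mem_reach B) (source_mem_reach B')) (fun e he h => hcut e h he) a
    (List.mem_of_mem_getLast? ha)
  have haA' : a ∈ A' :=
    (hB.mem_iff.1 (hA''B.mem_of_tl_mem_reach haA'' htB)).2.resolve_left (· hhB)
  exact haA ((hB'.mem_iff.1 (hA'B'.mem_of_tl_mem_reach haA' htB')).2.resolve_left (· hhB'))

end Cuts

theorem dominates_trans_general {V E : Type*} [Fintype E] (tl hd : E → V) (s : V)
    (A₁ A₂ A₃ : Finset E)
    (h12 : Dominates tl hd s A₁ A₂) (h23 : Dominates tl hd s A₂ A₃) :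
    Dominates tl hd s A₁ A₃ := by
  obtain ⟨hlt12, B₂, hB₂, hA₁B₂⟩ := h12
  obtain ⟨hlt23, B₃, hB₃, hA₂B₃⟩ := h23
  exact ⟨hlt12.trans hlt23, _, hB₂.edgeCut_reach_inter hB₃ hA₂B₃,
    hA₁B₂.edgeCut_reach_inter hB₂ hB₃ hA₂B₃⟩

/-- the domination relation `≺` on regular edge sets is transitive. -/
theorem dominates_trans {V E : Type*} [Fintype E] (tl hd : E → V) (s : V)
    (hacy : Acyclic tl hd) (hsrc : ∀ e : E, hd e ≠ s)
    (A₁ A₂ A₃ : Finset E)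
    (h₁ : Regular tl hd s A₁) (h₂ : Regular tl hd s A₂) (h₃ : Regular tl hd s A₃)
    (h12 : Dominates tl hd s A₁ A₂) (h23 : Dominates tl hd s A₂ A₃) :
    Dominates tl hd s A₁ A₃ :=
  dominates_trans_general tl hd s A₁ A₂ A₃ h12 h23
end

section
/- Let t be a non-source node in a finite directed acyclic graph G with source s. The binary relation ≤ on minimum cuts between s and t, defined by CUT₁ ≤ CUT₂ iff CUT₁ separates CUT₂ from s, is a non-strict partial order (reflexive, antisymmetric, and transitive). -/
open Finset

/-!
Reflexivity and transitivity hold for `Separates` on arbitrary edge sets: a path from `s` that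
reaches `C₃` meets `C₂`, and its prefix up to that edge meets `C₁`. For antisymmetry, minimality
gives every edge `e` of a minimum cut `C₁` a private `s`–`t` path, meeting `C₁` only in `e`.
Cut it at the first occurrence of `e`. Since `C₂` separates `C₁`, this prefix meets `C₂` in some
edge `g`; if `g ≠ e`, then `g` comes strictly before `e`, and since `C₁` separates `C₂`, the path
would meet `C₁` before `e`. So `e = g ∈ C₂`, i.e. `C₁ ⊆ C₂`, and by symmetry `C₁ = C₂`.
-/

section Separation

variable {V E : Type*} {tl hd : E → V} {s : V}

lemma PathFrom.of_prefix {p q : List E} (hp : PathFrom tl hd s p) (hq : q <+: p) (hne : q ≠ []) :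
    PathFrom tl hd s q := by
  obtain ⟨-, hchain, hhead⟩ := hp
  refine ⟨hne, List.IsChain.prefix hchain hq, ?_⟩
  obtain ⟨u, rfl⟩ := hq
  obtain ⟨a, l, rfl⟩ := List.exists_cons_of_ne_nil hne
  simpa using hhead

lemma PathFrom.exists_prefix_to_first {p : List E} (hp : PathFrom tl hd s p) {b : E}
    (hb : b ∈ p) : ∃ q, b ∉ q ∧ q ++ [b] <+: p ∧ PathFrom tl hd s (q ++ [b]) := by
  obtain ⟨q, u, rfl, hbq⟩ := List.eq_append_cons_of_mem hb
  have hpre : q ++ [b] <+: q ++ b :: u := ⟨u, by simp⟩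
  exact ⟨q, hbq, hpre, hp.of_prefix hpre (by simp)⟩

lemma Separates.exists_mem_of_mem {A B : Finset E} (h : Separates tl hd s A B) {p : List E}
    (hp : PathFrom tl hd s p) {a : E} (hap : a ∈ p) (haA : a ∈ A) : ∃ b ∈ B, b ∈ p := by
  obtain ⟨q, -, hpre, hq⟩ := hp.exists_prefix_to_first hap
  obtain ⟨b, hbB, hbq⟩ := h _ hq ⟨a, List.getLast?_concat, haA⟩
  exact ⟨b, hbB, hpre.subset hbq⟩

lemma Separates.refl (A : Finset E) : Separates tl hd s A A :=
  fun _ _ ⟨a, hlast, haA⟩ => ⟨a, haA, List.mem_of_mem_getLast? hlast⟩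

lemma Separates.trans {A B C : Finset E} (hAB : Separates tl hd s A B)
    (hBC : Separates tl hd s B C) : Separates tl hd s A C := by
  intro p hp hlast
  obtain ⟨b, hbB, hbp⟩ := hAB p hp hlast
  exact hBC.exists_mem_of_mem hp hbp hbB

end Separation

section MinCut

variable {V E : Type*} [Fintype E] {tl hd : E → V} {s t : V} {C : Finset E}

lemma IsNodeMinCut.exists_path_meeting_only (hC : IsNodeMinCut tl hd s t C) {e : E}
    (he : e ∈ C) : ∃ p, NPathFromTo tl hd s t p ∧ e ∈ p ∧ ∀ b ∈ p, b ∈ C → b = e := by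
  classical
  by_contra! hcon
  have hsep : NSeparates tl hd s t (C.erase e) := by
    intro p hp
    obtain ⟨c, hcC, hcp⟩ := hC.1 p hp
    by_cases hce : c = e
    · subst hce
      obtain ⟨b, hbp, hbC, hbe⟩ := hcon p hp hcp
      exact ⟨b, Finset.mem_erase.2 ⟨hbe, hbC⟩, hbp⟩
    · exact ⟨c, Finset.mem_erase.2 ⟨hce, hcC⟩, hcp⟩
  have hle : nmincut tl hd s t ≤ (C.erase e).card := Nat.sInf_le ⟨C.erase e, hsep, rfl⟩
  have hlt : (C.erase e).card < C.card := Finset.card_erase_lt_of_mem he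
  exact absurd hC.2 (by omega)

lemma IsNodeMinCut.subset_of_separates {D : Finset E} (hC : IsNodeMinCut tl hd s t C)
    (hCD : Separates tl hd s C D) (hDC : Separates tl hd s D C) : C ⊆ D := by
  intro e he
  obtain ⟨p, hp, hep, honly⟩ := hC.exists_path_meeting_only he
  obtain ⟨q, heq, hpre, hq⟩ := hp.1.exists_prefix_to_first hep
  obtain ⟨g, hgD, hgq⟩ := hCD _ hq ⟨e, List.getLast?_concat, he⟩
  rcases List.mem_append.1 hgq with hg | hg
  · have hqpath : PathFrom tl hd s q :=
      hq.of_prefix (List.prefix_append _ _) (List.ne_nil_of_mem hg)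
    obtain ⟨b, hbC, hbq⟩ := hDC.exists_mem_of_mem hqpath hg hgD
    have hbe : b = e := honly b (hpre.subset (List.mem_append_left _ hbq)) hbC
    exact absurd (hbe ▸ hbq) heq
  · rwa [List.mem_singleton.1 hg] at hgD

end MinCut

theorem cut_le_partialOrder_general {V E : Type*} [Fintype E] (tl hd : E → V) (s t : V) :
    (∀ C : Finset E, IsNodeMinCut tl hd s t C → Separates tl hd s C C) ∧
    (∀ C₁ C₂ : Finset E, IsNodeMinCut tl hd s t C₁ → IsNodeMinCut tl hd s t C₂ →
      Separates tl hd s C₂ C₁ → Separates tl hd s C₁ C₂ → C₁ = C₂) ∧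
    (∀ C₁ C₂ C₃ : Finset E, IsNodeMinCut tl hd s t C₁ → IsNodeMinCut tl hd s t C₂ →
      IsNodeMinCut tl hd s t C₃ →
      Separates tl hd s C₂ C₁ → Separates tl hd s C₃ C₂ → Separates tl hd s C₃ C₁) :=
  ⟨fun C _ => Separates.refl C,
    fun _ _ hC₁ hC₂ h₂₁ h₁₂ =>
      (hC₁.subset_of_separates h₁₂ h₂₁).antisymm (hC₂.subset_of_separates h₂₁ h₁₂),
    fun _ _ _ _ _ _ h₂₁ h₃₂ => h₃₂.trans h₂₁⟩

/-- the relation `CUT₁ ≤ CUT₂` (i.e. `CUT₁` separates `CUT₂` from `s`)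
on minimum cuts between `s` and `t` is reflexive, antisymmetric and transitive. -/
theorem cut_le_partialOrder {V E : Type*} [Fintype E] (tl hd : E → V) (s t : V)
    (hacy : Acyclic tl hd) (hsrc : ∀ e : E, hd e ≠ s) (hts : t ≠ s) :
    (∀ C : Finset E, IsNodeMinCut tl hd s t C → Separates tl hd s C C) ∧
    (∀ C₁ C₂ : Finset E, IsNodeMinCut tl hd s t C₁ → IsNodeMinCut tl hd s t C₂ →
      Separates tl hd s C₂ C₁ → Separates tl hd s C₁ C₂ → C₁ = C₂) ∧
    (∀ C₁ C₂ C₃ : Finset E, IsNodeMinCut tl hd s t C₁ → IsNodeMinCut tl hd s t C₂ →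
      IsNodeMinCut tl hd s t C₃ →
      Separates tl hd s C₂ C₁ → Separates tl hd s C₃ C₂ → Separates tl hd s C₃ C₁) :=
  cut_le_partialOrder_general tl hd s t
end

section
/- Any two minimum cuts between s and a non-source node t in a finite directed acyclic graph have a common minimum cut, i.e., there exists a minimum cut between s and t that separates both of them from s. Consequently all minimum cuts in MinCut(t) are pairwise equivalent under ∼. -/
open Finset

/-! The vertex set `S(B)` reachable from `s` by paths avoiding a minimum cut `B` has edge
boundary exactly `B`. For two minimum cuts the boundaries of `S₁ ∩ S₂` and `S₁ ∪ S₂` are again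
cuts, and by submodularity of the boundary size both are minimum. Every path from `s` into
`CUTᵢ = δ(Sᵢ)` leaves `S₁ ∩ S₂`, so `δ(S₁ ∩ S₂)` separates both cuts from `s`; it is minimum for
each of them because any separator of a cut is itself a cut between `s` and `t`. -/

section MinCuts

variable {V E : Type*} {tl hd : E → V} {s t : V}

variable (tl hd) in
open Classical in
noncomputable def edgeBoundary [Fintype E] (S : Set V) : Finset E :=
  {e | tl e ∈ S ∧ hd e ∉ S}

lemma mem_edgeBoundary [Fintype E] {S : Set V} {e : E} :
    e ∈ edgeBoundary tl hd S ↔ tl e ∈ S ∧ hd e ∉ S := by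
  simp [edgeBoundary]

lemma EChain.exists_mem_edgeBoundary {S : Set V} :
    ∀ {x : E} {p : List E}, EChain tl hd (x :: p) → tl x ∈ S →
      ∀ e ∈ (x :: p).getLast?, hd e ∉ S → ∃ c ∈ x :: p, tl c ∈ S ∧ hd c ∉ S
  | x, [], _, hx, e, he, hout => by
    obtain rfl : x = e := by simpa using he
    exact ⟨x, List.mem_singleton_self x, hx, hout⟩
  | x, y :: p, hch, hx, e, he, hout => by
    rw [EChain, List.Chain', List.isChain_cons_cons] at hch
    by_cases hxS : hd x ∈ S
    · obtain ⟨c, hc, hcS⟩ := EChain.exists_mem_edgeBoundary hch.2 (hch.1 ▸ hxS) e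
        (by simpa [List.getLast?_cons_cons] using he) hout
      exact ⟨c, List.mem_cons_of_mem x hc, hcS⟩
    · exact ⟨x, List.mem_cons_self, hx, hxS⟩

lemma PathFrom.exists_mem_edgeBoundary [Fintype E] {S : Set V} {p : List E}
    (hp : PathFrom tl hd s p) (hs : s ∈ S) {e : E} (he : e ∈ p.getLast?) (hout : hd e ∉ S) :
    ∃ c ∈ edgeBoundary tl hd S, c ∈ p := by
  obtain ⟨hne, hch, hhead⟩ := hp
  obtain ⟨x, q, rfl⟩ := List.exists_cons_of_ne_nil hne
  obtain ⟨c, hc, hcS⟩ := hch.exists_mem_edgeBoundary (hhead x rfl ▸ hs) e he hout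
  exact ⟨c, mem_edgeBoundary.mpr hcS, hc⟩

lemma PathFrom.concat {p : List E} (hp : PathFrom tl hd s p) {d e : E} (hdp : d ∈ p.getLast?)
    (hde : hd d = tl e) : PathFrom tl hd s (p ++ [e]) := by
  obtain ⟨hne, hch, hhead⟩ := hp
  refine ⟨by simp, hch.append (List.isChain_singleton e) ?_, ?_⟩
  · intro x hx y hy
    obtain rfl : e = y := by simpa using hy
    obtain rfl : x = d := Option.mem_unique hx hdp
    exact hde
  · rwa [List.head?_append_of_ne_nil p hne]

lemma nSeparates_edgeBoundary [Fintype E] {S : Set V} (hs : s ∈ S) (ht : t ∉ S) :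
    NSeparates tl hd s t (edgeBoundary tl hd S) := by
  rintro p ⟨hp, hlast⟩
  obtain ⟨e, he⟩ := Option.isSome_iff_exists.mp (List.getLast?_isSome.mpr hp.1)
  exact hp.exists_mem_edgeBoundary hs he (hlast e he ▸ ht)

lemma separates_edgeBoundary_of_subset [Fintype E] {S S' : Set V} (hs : s ∈ S')
    (hS' : S' ⊆ S) : Separates tl hd s (edgeBoundary tl hd S) (edgeBoundary tl hd S') := by
  rintro p hp ⟨e, he, heS⟩
  exact hp.exists_mem_edgeBoundary hs he fun h => (mem_edgeBoundary.mp heS).2 (hS' h)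

variable (tl hd) in
lemma card_edgeBoundary_inter_add_card_edgeBoundary_union_le [Fintype E] (S T : Set V) :
    #(edgeBoundary tl hd (S ∩ T)) + #(edgeBoundary tl hd (S ∪ T)) ≤
      #(edgeBoundary tl hd S) + #(edgeBoundary tl hd T) := by
  classical
  simp only [edgeBoundary, card_filter, ← sum_add_distrib]
  refine sum_le_sum fun e _ => ?_
  by_cases h1 : tl e ∈ S <;> by_cases h2 : tl e ∈ T <;>
    by_cases h3 : hd e ∈ S <;> by_cases h4 : hd e ∈ T <;> simp [h1, h2, h3, h4]

lemma nmincut_le_card [Fintype E] {B : Finset E} (hB : NSeparates tl hd s t B) :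
    nmincut tl hd s t ≤ #B :=
  Nat.sInf_le ⟨B, hB, rfl⟩

lemma isNodeMinCut_edgeBoundary_inter [Fintype E] {S T : Set V} (hsS : s ∈ S) (hsT : s ∈ T)
    (htS : t ∉ S) (htT : t ∉ T) (hS : IsNodeMinCut tl hd s t (edgeBoundary tl hd S))
    (hT : IsNodeMinCut tl hd s t (edgeBoundary tl hd T)) :
    IsNodeMinCut tl hd s t (edgeBoundary tl hd (S ∩ T)) := by
  have hcut : NSeparates tl hd s t (edgeBoundary tl hd (S ∩ T)) :=
    nSeparates_edgeBoundary ⟨hsS, hsT⟩ fun h => htS h.1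
  have hinter := nmincut_le_card hcut
  have hunion := nmincut_le_card (nSeparates_edgeBoundary (tl := tl) (hd := hd)
    (S := S ∪ T) (Or.inl hsS) fun h => h.elim htS htT)
  have hsub := card_edgeBoundary_inter_add_card_edgeBoundary_union_le tl hd S T
  exact ⟨hcut, by linarith [hS.2, hT.2]⟩

lemma NSeparates.of_separates {A B : Finset E} (hA : NSeparates tl hd s t A)
    (hAB : Separates tl hd s A B) : NSeparates tl hd s t B := by
  intro p hp
  obtain ⟨a, haA, hap⟩ := hA p hp
  obtain ⟨u, v, rfl⟩ := List.append_of_mem hap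
  obtain ⟨⟨-, hch, hhead⟩, -⟩ := hp
  have hprefix : u ++ [a] <+: u ++ a :: v := ⟨v, by simp⟩
  have hpath : PathFrom tl hd s (u ++ [a]) := by
    refine ⟨by simp, hch.prefix hprefix, fun e he => hhead e ?_⟩
    cases u <;> simpa using he
  obtain ⟨b, hbB, hb⟩ := hAB (u ++ [a]) hpath ⟨a, List.getLast?_concat, haA⟩
  exact ⟨b, hbB, hprefix.subset hb⟩

lemma isMinCut_of_separates [Fintype E] {A C : Finset E} (hA : NSeparates tl hd s t A)
    (hC : IsNodeMinCut tl hd s t C) (hAC : Separates tl hd s A C) : IsMinCut tl hd s A C := by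
  refine ⟨hAC, le_antisymm ?_ (Nat.sInf_le ⟨C, hAC, rfl⟩)⟩
  refine hC.2 ▸ le_csInf ⟨#C, C, hAC, rfl⟩ ?_
  rintro n ⟨B, hB, rfl⟩
  exact nmincut_le_card (hA.of_separates hB)

variable (tl hd s) in
def reachAvoiding (B : Finset E) : Set V :=
  {v | v = s ∨ ∃ p : List E, PathFrom tl hd s p ∧ (∀ e ∈ p, e ∉ B) ∧ ∃ e ∈ p.getLast?, hd e = v}

lemma start_mem_reachAvoiding (B : Finset E) : s ∈ reachAvoiding tl hd s B :=
  Or.inl rfl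

lemma notMem_reachAvoiding {B : Finset E} (hts : t ≠ s) (hB : NSeparates tl hd s t B) :
    t ∉ reachAvoiding tl hd s B := by
  rintro (rfl | ⟨p, hp, havoid, e, he, rfl⟩)
  · exact hts rfl
  · obtain ⟨b, hbB, hbp⟩ := hB p ⟨hp, fun e' he' => by rw [Option.mem_unique he' he]⟩
    exact havoid b hbp hbB

lemma edgeBoundary_reachAvoiding_subset [Fintype E] (B : Finset E) :
    edgeBoundary tl hd (reachAvoiding tl hd s B) ⊆ B := by
  intro e he
  obtain ⟨htl, hhd⟩ := mem_edgeBoundary.mp he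
  by_contra heB
  apply hhd
  rcases htl with hs | ⟨p, hp, havoid, d, hdp, hde⟩
  · exact Or.inr ⟨[e], ⟨by simp, List.isChain_singleton e, by simpa using hs⟩,
      by simpa using heB, e, rfl, rfl⟩
  · refine Or.inr ⟨p ++ [e], hp.concat hdp hde, fun b hb => ?_, e, List.getLast?_concat, rfl⟩
    rcases List.mem_append.mp hb with hb | hb
    · exact havoid b hb
    · obtain rfl : b = e := by simpa using hb
      exact heB

lemma edgeBoundary_reachAvoiding_eq [Fintype E] (hts : t ≠ s) {B : Finset E}
    (hB : IsNodeMinCut tl hd s t B) : edgeBoundary tl hd (reachAvoiding tl hd s B) = B := by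
  refine eq_of_subset_of_card_le (edgeBoundary_reachAvoiding_subset B) ?_
  rw [hB.2]
  exact nmincut_le_card (nSeparates_edgeBoundary (start_mem_reachAvoiding B)
    (notMem_reachAvoiding hts hB.1))

end MinCuts

theorem nodeMinCuts_equiv_general {V E : Type*} [Fintype E] (tl hd : E → V) (s t : V)
    (hts : t ≠ s)
    (CUT₁ CUT₂ : Finset E)
    (h₁ : IsNodeMinCut tl hd s t CUT₁) (h₂ : IsNodeMinCut tl hd s t CUT₂) :
    EquivSets tl hd s CUT₁ CUT₂ := by
  set S₁ := reachAvoiding tl hd s CUT₁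
  set S₂ := reachAvoiding tl hd s CUT₂
  have hs₁ : s ∈ S₁ := start_mem_reachAvoiding CUT₁
  have hs₂ : s ∈ S₂ := start_mem_reachAvoiding CUT₂
  have hδ₁ : edgeBoundary tl hd S₁ = CUT₁ := edgeBoundary_reachAvoiding_eq hts h₁
  have hδ₂ : edgeBoundary tl hd S₂ = CUT₂ := edgeBoundary_reachAvoiding_eq hts h₂
  have hC : IsNodeMinCut tl hd s t (edgeBoundary tl hd (S₁ ∩ S₂)) :=
    isNodeMinCut_edgeBoundary_inter hs₁ hs₂ (notMem_reachAvoiding hts h₁.1)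
      (notMem_reachAvoiding hts h₂.1) (hδ₁ ▸ h₁) (hδ₂ ▸ h₂)
  refine ⟨_, isMinCut_of_separates h₁.1 hC ?_, isMinCut_of_separates h₂.1 hC ?_⟩
  · exact hδ₁ ▸ separates_edgeBoundary_of_subset ⟨hs₁, hs₂⟩ Set.inter_subset_left
  · exact hδ₂ ▸ separates_edgeBoundary_of_subset ⟨hs₁, hs₂⟩ Set.inter_subset_right

/-- any two minimum cuts between `s` and a non-source node `t`
have a common minimum cut from `s`; i.e. they are equivalent under `∼`. -/
theorem nodeMinCuts_equiv {V E : Type*} [Fintype E] (tl hd : E → V) (s t : V)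
    (hacy : Acyclic tl hd) (hsrc : ∀ e : E, hd e ≠ s) (hts : t ≠ s)
    (CUT₁ CUT₂ : Finset E)
    (h₁ : IsNodeMinCut tl hd s t CUT₁) (h₂ : IsNodeMinCut tl hd s t CUT₂) :
    EquivSets tl hd s CUT₁ CUT₂ :=
  nodeMinCuts_equiv_general tl hd s t hts CUT₁ CUT₂ h₁ h₂
end
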